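/- arXiv:2305.08813 — 2 statements merged into one kernel-verified Lean document; each statement's English description precedes it below -/
import Mathlib

section
/- Let n, d be positive integers, let B be an n×d real matrix with rows b_1, …, b_n, and let A = B Bᵀ. Suppose A is positive definite, there is a constant c > 0 with ‖b_k‖ ≥ c for all k ∈ [n], and i ≠ j are indices such that the angle φ = arccos(⟨b_i, b_j⟩/(‖b_i‖‖b_j‖)) between b_i and b_j satisfies 0 < φ. Then the condition number κ(A) = λ_max(A)/λ_min(A) satisfies κ(A) ≥ c² (‖b_i‖² + ‖b_j‖²) / (2‖b_i‖²‖b_j‖² (1 − cos φ)), and consequently κ(A) ≥ c² (‖b_i‖² + ‖b_j‖²) / (‖b_i‖²‖b_j‖² φ²). -/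
/-!
By the Rayleigh principle, `λ_max(A) ≥ A i i = ‖b i‖² ≥ c²`, while testing `λ_min(A)` against
`x = ‖b j‖ eᵢ - ‖b i‖ eⱼ` gives `λ_min(A) (‖b i‖² + ‖b j‖²) ≤ xᵀ A x = ‖‖b j‖ b i - ‖b i‖ b j‖²
= 2 ‖b i‖² ‖b j‖² (1 - cos φ)`. Dividing gives the first bound, and `2 (1 - cos φ) ≤ φ²` the second.
-/

open scoped RealInnerProductSpace Matrix MatrixOrder
open InnerProductGeometry

theorem InnerProductGeometry.norm_smul_sub_smul_sq {V : Type*} [NormedAddCommGroup V]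
    [InnerProductSpace ℝ V] (x y : V) :
    ‖‖y‖ • x - ‖x‖ • y‖ ^ 2 = 2 * ‖x‖ ^ 2 * ‖y‖ ^ 2 * (1 - Real.cos (angle x y)) := by
  rw [norm_sub_sq_real, inner_smul_left, inner_smul_right, ← cos_angle_mul_norm_mul_norm,
    norm_smul, norm_smul, Real.norm_of_nonneg (norm_nonneg _), Real.norm_of_nonneg (norm_nonneg _)]
  simp only [conj_trivial]
  ring

namespace Matrix

variable {m : Type*} [Fintype m] [DecidableEq m] {A : Matrix m m ℝ}

theorem IsHermitian.sInf_spectrum_mul_dotProduct_self_le (hA : A.IsHermitian) (x : m → ℝ) :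
    sInf (spectrum ℝ A) * (x ⬝ᵥ x) ≤ x ⬝ᵥ A *ᵥ x := by
  have hle : algebraMap ℝ _ (sInf (spectrum ℝ A)) ≤ A :=
    (algebraMap_le_iff_le_spectrum hA.isSelfAdjoint).2
      fun _ h ↦ csInf_le A.finite_real_spectrum.bddBelow h
  simpa [sub_mulVec, Algebra.algebraMap_eq_smul_one, smul_mulVec] using
    (le_iff.1 hle).dotProduct_mulVec_nonneg x

theorem IsHermitian.dotProduct_mulVec_le_sSup_spectrum_mul (hA : A.IsHermitian) (x : m → ℝ) :
    x ⬝ᵥ A *ᵥ x ≤ sSup (spectrum ℝ A) * (x ⬝ᵥ x) := by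
  have hle : A ≤ algebraMap ℝ _ (sSup (spectrum ℝ A)) :=
    (le_algebraMap_iff_spectrum_le hA.isSelfAdjoint).2
      fun _ h ↦ le_csSup A.finite_real_spectrum.bddAbove h
  simpa [sub_mulVec, Algebra.algebraMap_eq_smul_one, smul_mulVec] using
    (le_iff.1 hle).dotProduct_mulVec_nonneg x

theorem IsHermitian.diag_le_sSup_spectrum (hA : A.IsHermitian) (i : m) :
    A i i ≤ sSup (spectrum ℝ A) := by
  simpa using hA.dotProduct_mulVec_le_sSup_spectrum_mul (Pi.single i 1)

theorem PosDef.sInf_spectrum_pos [Nonempty m] (hA : A.PosDef) : 0 < sInf (spectrum ℝ A) :=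
  hA.isStrictlyPositive.spectrum_pos <|
    Set.Nonempty.csInf_mem ⟨_, hA.isHermitian.eigenvalues_mem_spectrum_real (Classical.arbitrary m)⟩
      A.finite_real_spectrum

theorem sInf_spectrum_gram_mul_le {E ι : Type*} [NormedAddCommGroup E] [InnerProductSpace ℝ E]
    [Fintype ι] [DecidableEq ι] (b : ι → E) {i j : ι} (hij : i ≠ j) :
    sInf (spectrum ℝ (gram ℝ b)) * (‖b i‖ ^ 2 + ‖b j‖ ^ 2) ≤
      2 * ‖b i‖ ^ 2 * ‖b j‖ ^ 2 * (1 - Real.cos (angle (b i) (b j))) := by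
  set x : ι → ℝ := Pi.single i ‖b j‖ - Pi.single j ‖b i‖
  have hxx : x ⬝ᵥ x = ‖b i‖ ^ 2 + ‖b j‖ ^ 2 := by
    simp only [x, dotProduct_sub, dotProduct_single, Pi.sub_apply, Pi.single_eq_same,
      Pi.single_eq_of_ne hij, Pi.single_eq_of_ne hij.symm]
    ring
  have hsum : ∑ k, x k • b k = ‖b j‖ • b i - ‖b i‖ • b j := by
    simp [x, sub_smul, Finset.sum_sub_distrib, Pi.single_apply, ite_smul]
  have hxAx : x ⬝ᵥ gram ℝ b *ᵥ x = ‖‖b j‖ • b i - ‖b i‖ • b j‖ ^ 2 := by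
    simpa [hsum] using star_dotProduct_gram_mulVec b x x
  rw [← hxx, ← norm_smul_sub_smul_sq, ← hxAx]
  exact (isHermitian_gram ℝ b).sInf_spectrum_mul_dotProduct_self_le x

end Matrix

theorem condition_number_ge_of_small_angle_general
    {n d : ℕ}
    (b : Fin n → EuclideanSpace ℝ (Fin d))
    (A : Matrix (Fin n) (Fin n) ℝ)
    (hA : ∀ k l, A k l = ⟪b k, b l⟫)
    (hApd : A.PosDef)
    (c : ℝ) (hc : 0 < c) (hnorm : ∀ k, c ≤ ‖b k‖)
    (i j : Fin n) (hij : i ≠ j)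
    (φ : ℝ) (hφ : φ = InnerProductGeometry.angle (b i) (b j)) (hφpos : 0 < φ) :
    c ^ 2 * (‖b i‖ ^ 2 + ‖b j‖ ^ 2) / (2 * ‖b i‖ ^ 2 * ‖b j‖ ^ 2 * (1 - Real.cos φ)) ≤
      sSup (spectrum ℝ A) / sInf (spectrum ℝ A) ∧
    c ^ 2 * (‖b i‖ ^ 2 + ‖b j‖ ^ 2) / (‖b i‖ ^ 2 * ‖b j‖ ^ 2 * φ ^ 2) ≤
      sSup (spectrum ℝ A) / sInf (spectrum ℝ A) := by
  obtain rfl : A = Matrix.gram ℝ b := Matrix.ext hA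
  have : Nonempty (Fin n) := ⟨i⟩
  have hmin_pos := hApd.sInf_spectrum_pos
  have hc_le_max : c ^ 2 ≤ sSup (spectrum ℝ (Matrix.gram ℝ b)) := by
    have := hApd.isHermitian.diag_le_sSup_spectrum i
    rw [Matrix.gram_apply, real_inner_self_eq_norm_sq] at this
    exact (pow_le_pow_left₀ hc.le (hnorm i) 2).trans this
  have hcos : Real.cos φ < 1 := by
    simpa using Real.cos_lt_cos_of_nonneg_of_le_pi le_rfl (hφ ▸ angle_le_pi _ _) hφpos
  have hden_pos : 0 < 2 * ‖b i‖ ^ 2 * ‖b j‖ ^ 2 * (1 - Real.cos φ) := by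
    have := hc.trans_le (hnorm i)
    have := hc.trans_le (hnorm j)
    have : 0 < 1 - Real.cos φ := by linarith
    positivity
  have first : c ^ 2 * (‖b i‖ ^ 2 + ‖b j‖ ^ 2) / (2 * ‖b i‖ ^ 2 * ‖b j‖ ^ 2 * (1 - Real.cos φ)) ≤
      sSup (spectrum ℝ (Matrix.gram ℝ b)) / sInf (spectrum ℝ (Matrix.gram ℝ b)) := by
    rw [div_le_div_iff₀ hden_pos hmin_pos, mul_assoc, mul_comm _ (sInf _)]
    exact mul_le_mul hc_le_max (hφ ▸ Matrix.sInf_spectrum_gram_mul_le b hij) (by positivity)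
      ((sq_nonneg c).trans hc_le_max)
  have hcos_ge : 2 * (1 - Real.cos φ) ≤ φ ^ 2 := by
    linarith [Real.one_sub_sq_div_two_le_cos (x := φ)]
  refine ⟨first, first.trans' (div_le_div_of_nonneg_left (by positivity) hden_pos ?_)⟩
  nlinarith [mul_le_mul_of_nonneg_left hcos_ge (by positivity : 0 ≤ ‖b i‖ ^ 2 * ‖b j‖ ^ 2)]

/-- Proposition 2.2 of the paper, explicit quantitative form.
`b 1, …, b n` are the rows of an `n × d` real matrix `B` (viewed as vectors of
`EuclideanSpace ℝ (Fin d)`), and `A = B Bᵀ` is the Gram matrix of the rows, i.e.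
`A k l = ⟪b k, b l⟫`.  `sInf (spectrum ℝ A)` and `sSup (spectrum ℝ A)` are the smallest
and largest eigenvalues of `A`, so `κ(A) = sSup (spectrum ℝ A) / sInf (spectrum ℝ A)`.
If `A` is positive definite, all rows have norm at least `c > 0`, and `i ≠ j` are indices
whose rows have angle `φ > 0`, then
`κ(A) ≥ c²(‖b i‖² + ‖b j‖²)/(2‖b i‖²‖b j‖²(1 − cos φ))` and consequently
`κ(A) ≥ c²(‖b i‖² + ‖b j‖²)/(‖b i‖²‖b j‖² φ²)`. -/
theorem condition_number_ge_of_small_angle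
    {n d : ℕ} (hn : 0 < n) (hd : 0 < d)
    (b : Fin n → EuclideanSpace ℝ (Fin d))
    (A : Matrix (Fin n) (Fin n) ℝ)
    (hA : ∀ k l, A k l = ⟪b k, b l⟫)
    (hApd : A.PosDef)
    (c : ℝ) (hc : 0 < c) (hnorm : ∀ k, c ≤ ‖b k‖)
    (i j : Fin n) (hij : i ≠ j)
    (φ : ℝ) (hφ : φ = InnerProductGeometry.angle (b i) (b j)) (hφpos : 0 < φ) :
    c ^ 2 * (‖b i‖ ^ 2 + ‖b j‖ ^ 2) / (2 * ‖b i‖ ^ 2 * ‖b j‖ ^ 2 * (1 - Real.cos φ)) ≤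
      sSup (spectrum ℝ A) / sInf (spectrum ℝ A) ∧
    c ^ 2 * (‖b i‖ ^ 2 + ‖b j‖ ^ 2) / (‖b i‖ ^ 2 * ‖b j‖ ^ 2 * φ ^ 2) ≤
      sSup (spectrum ℝ A) / sInf (spectrum ℝ A) :=
  condition_number_ge_of_small_angle_general b A hA hApd c hc hnorm i j hij φ hφ hφpos
end

section
/- Define g : [0, π) → [0, π) by g(z) = arccos( ((π − z) cos z + sin z)/π ), let g^l be the l-fold iterate of g (g^0 = identity), and for an integer L ≥ 0 define F_L : [0, π) → ℝ by F_L(θ) = (1/(L+1)) Σ_{l=0}^{L} [ cos(g^l(θ)) · Π_{l'=l}^{L−1} (1 − g^{l'}(θ)/π) ] (empty product equal to 1). Then for every fixed L, as θ → 0 from the right, F_L(θ) = (1 − (L/(2π)) θ + o(θ)) · cos θ; that is, θ ↦ F_L(θ) − (1 − (L/(2π))θ) cos θ is o(θ) as θ → 0⁺. -/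
open Asymptotics

/-- The layer-to-layer embedding-angle map of an infinitely wide ReLU network:
`g z = arccos(((π − z) cos z + sin z)/π)`. -/
noncomputable def g (z : ℝ) : ℝ :=
  Real.arccos (((Real.pi - z) * Real.cos z + Real.sin z) / Real.pi)

/-- The cosine of the model-gradient angle of an infinitely wide depth-`L` ReLU network
(Theorem 4.3 of the paper):
`F L θ = (1/(L+1)) ∑_{l=0}^{L} cos (g^[l] θ) ∏_{l'=l}^{L−1} (1 − g^[l'] θ / π)`,
with the empty product equal to `1`. -/
noncomputable def F (L : ℕ) (θ : ℝ) : ℝ :=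
  (1 / ((L : ℝ) + 1)) * ∑ l ∈ Finset.range (L + 1),
    Real.cos (g^[l] θ) * ∏ l' ∈ Finset.Ico l L, (1 - g^[l'] θ / Real.pi)

/-!
Since `g 0 = 0` and `z - z² ≤ g z ≤ z` for `0 ≤ z ≤ 1`, the map `g` has right derivative `1`
at `0`, and so has each iterate `g^[l]`. Differentiating `F L` termwise at `0⁺` therefore gives
`F L 0 = 1` and `(F L)'(0⁺) = -(1/(L+1)) ∑_{l ≤ L} (L - l)/π = -L/(2π)`, which are also the
value and right derivative of `(1 - Lθ/(2π)) cos θ`; functions with the same value and right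
derivative at `0` differ by `o(θ)`.
-/

open Real Set Filter Topology Finset

lemma mul_cos_le_sin {z : ℝ} (h0 : 0 ≤ z) (h1 : z < π / 2) : z * cos z ≤ sin z := by
  have hcos : 0 < cos z := cos_pos_of_mem_Ioo ⟨by linarith [pi_pos], h1⟩
  have := le_tan h0 h1
  rwa [tan_eq_sin_div_cos, le_div_iff₀ hcos] at this

lemma sin_sub_mul_cos_le {z : ℝ} (hz : 0 ≤ z) : sin z - z * cos z ≤ z ^ 3 / 2 := by
  nlinarith [sin_le hz, one_sub_sq_div_two_le_cos (x := z)]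

lemma g_eq_arccos (z : ℝ) : g z = arccos (cos z + (sin z - z * cos z) / π) := by
  rw [g]; congr 1; field_simp; ring

lemma g_le_self {z : ℝ} (h0 : 0 ≤ z) (h1 : z < π / 2) : g z ≤ z := by
  have hle : cos z ≤ cos z + (sin z - z * cos z) / π :=
    le_add_of_nonneg_right (div_nonneg (by linarith [mul_cos_le_sin h0 h1]) pi_pos.le)
  calc g z ≤ arccos (cos z) := g_eq_arccos z ▸ arccos_le_arccos hle
    _ = z := arccos_cos h0 (by linarith [pi_pos])

lemma two_mul_cube_div_pi_sq_le_cos_sub_sq_sub_cos {z : ℝ} (h0 : 0 ≤ z) (h1 : z ≤ 1) :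
    2 * z ^ 3 / π ^ 2 ≤ cos (z - z ^ 2) - cos z := by
  have hπ : 3 < π := pi_gt_three
  have ha : 0 ≤ z - z ^ 2 / 2 := by nlinarith
  have hdiff : cos (z - z ^ 2) - cos z = 2 * sin (z - z ^ 2 / 2) * sin (z ^ 2 / 2) := by
    rw [cos_sub_cos, show (z - z ^ 2 + z) / 2 = z - z ^ 2 / 2 by ring,
      show (z - z ^ 2 - z) / 2 = -(z ^ 2 / 2) by ring, sin_neg]
    ring
  -- Jordan's inequality `2x/π ≤ sin x` on both sine factors
  have hs1 : 2 / π * (z - z ^ 2 / 2) ≤ sin (z - z ^ 2 / 2) := mul_le_sin ha (by nlinarith)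
  have hs2 : 2 / π * (z ^ 2 / 2) ≤ sin (z ^ 2 / 2) := mul_le_sin (by positivity) (by nlinarith)
  calc 2 * z ^ 3 / π ^ 2 ≤ 2 * (2 / π * (z - z ^ 2 / 2)) * (2 / π * (z ^ 2 / 2)) := by
        field_simp
        nlinarith [pow_nonneg h0 3, pow_nonneg h0 4]
    _ ≤ 2 * sin (z - z ^ 2 / 2) * sin (z ^ 2 / 2) := by
        have : 0 ≤ 2 / π * (z - z ^ 2 / 2) := by positivity
        gcongr
        linarith
    _ = cos (z - z ^ 2) - cos z := hdiff.symm

lemma sub_sq_le_g {z : ℝ} (h0 : 0 ≤ z) (h1 : z ≤ 1) : z - z ^ 2 ≤ g z := by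
  have hle : cos z + (sin z - z * cos z) / π ≤ cos (z - z ^ 2) := by
    have hcube : (sin z - z * cos z) / π ≤ 2 * z ^ 3 / π ^ 2 := by
      have hX0 : 0 ≤ sin z - z * cos z := by
        linarith [mul_cos_le_sin h0 (by linarith [pi_gt_three])]
      have hXπ : (sin z - z * cos z) * π ≤ z ^ 3 / 2 * 4 :=
        mul_le_mul (sin_sub_mul_cos_le h0) pi_le_four pi_pos.le (by positivity)
      rw [div_le_div_iff₀ pi_pos (by positivity)]
      nlinarith [pi_pos]
    linarith [two_mul_cube_div_pi_sq_le_cos_sub_sq_sub_cos h0 h1]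
  calc z - z ^ 2 = arccos (cos (z - z ^ 2)) :=
        (arccos_cos (by nlinarith) (by nlinarith [pi_gt_three])).symm
    _ ≤ g z := g_eq_arccos z ▸ arccos_le_arccos hle

lemma g_zero : g 0 = 0 := by simp [g, pi_ne_zero]

lemma abs_g_sub_self_le {z : ℝ} (h0 : 0 ≤ z) (h1 : z ≤ 1) : |g z - z| ≤ z ^ 2 := by
  rw [abs_le]
  constructor
  · linarith [sub_sq_le_g h0 h1]
  · linarith [g_le_self h0 (by linarith [pi_gt_three]), sq_nonneg z]

lemma hasDerivWithinAt_g : HasDerivWithinAt g 1 (Ici 0) 0 := by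
  rw [hasDerivWithinAt_iff_isLittleO]
  simp only [g_zero, sub_zero, smul_eq_mul, mul_one]
  refine IsBigO.trans_isLittleO (g := fun z : ℝ => z ^ 2) ?_
    ((isLittleO_pow_id one_lt_two).mono nhdsWithin_le_nhds)
  refine IsBigO.of_bound 1 ?_
  filter_upwards [Icc_mem_nhdsGE one_pos] with z hz
  simpa [abs_of_nonneg (sq_nonneg z)] using abs_g_sub_self_le hz.1 hz.2

lemma mapsTo_g : MapsTo g (Ici 0) (Ici 0) := fun _ _ => arccos_nonneg _

lemma hasDerivWithinAt_iterate_g (l : ℕ) : HasDerivWithinAt g^[l] 1 (Ici 0) 0 := by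
  simpa using HasDerivWithinAt.iterate 0 hasDerivWithinAt_g g_zero mapsTo_g l

lemma iterate_g_zero (l : ℕ) : g^[l] 0 = 0 := Function.iterate_fixed g_zero l

lemma hasDerivWithinAt_cos_iterate_g (l : ℕ) :
    HasDerivWithinAt (fun θ => cos (g^[l] θ)) 0 (Ici 0) 0 := by
  simpa [iterate_g_zero] using (hasDerivWithinAt_iterate_g l).cos

lemma hasDerivWithinAt_prod_one_sub_iterate_g (s : Finset ℕ) :
    HasDerivWithinAt (fun θ => ∏ i ∈ s, (1 - g^[i] θ / π)) (-#s / π) (Ici 0) 0 := by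
  have hfac (i : ℕ) : HasDerivWithinAt (fun θ => 1 - g^[i] θ / π) (-(1 / π)) (Ici 0) 0 := by
    simpa using ((hasDerivWithinAt_iterate_g i).div_const π).const_sub 1
  refine (HasDerivWithinAt.fun_finsetProd fun i _ => hfac i).congr_deriv ?_
  simp [iterate_g_zero, div_eq_mul_inv]

lemma sum_range_card_Ico (L : ℕ) :
    ∑ l ∈ range (L + 1), (#(Ico l L) : ℝ) = L * (L + 1) / 2 := by
  have hgauss : (∑ l ∈ range (L + 1), l) * 2 = (L + 1) * L := sum_range_id_mul_two (L + 1)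
  have hreflect : ∑ l ∈ range (L + 1), #(Ico l L) = ∑ l ∈ range (L + 1), l := by
    simpa [Nat.card_Ico] using sum_range_reflect (fun l => l) (L + 1)
  rw [← Nat.cast_sum, hreflect, eq_div_iff two_ne_zero]
  exact_mod_cast hgauss.trans (mul_comm _ _)

lemma hasDerivWithinAt_F (L : ℕ) :
    HasDerivWithinAt (F L) (-(L / (2 * π))) (Ici 0) 0 := by
  have hterm (l : ℕ) : HasDerivWithinAt
      (fun θ => cos (g^[l] θ) * ∏ l' ∈ Ico l L, (1 - g^[l'] θ / π))
      (-#(Ico l L) / π) (Ici 0) 0 := by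
    simpa [iterate_g_zero] using (hasDerivWithinAt_cos_iterate_g l).fun_mul
      (hasDerivWithinAt_prod_one_sub_iterate_g (Ico l L))
  refine ((HasDerivWithinAt.fun_sum fun l _ => hterm l).const_mul
    (1 / ((L : ℝ) + 1))).congr_deriv ?_
  rw [← sum_div, sum_neg_distrib, sum_range_card_Ico]
  field_simp

lemma F_zero (L : ℕ) : F L 0 = 1 := by
  simp only [F, one_div, iterate_g_zero, cos_zero, zero_div, sub_zero, prod_const_one, mul_one,
    sum_const, card_range, nsmul_eq_mul, Nat.cast_add, Nat.cast_one]
  field_simp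

/-- Theorem 4.4 of the paper, the better-separation expansion.
For every fixed `L`, as `θ → 0⁺`, `F L θ = (1 − (L/(2π)) θ + o(θ)) cos θ`; i.e. the
function `θ ↦ F L θ − (1 − (L/(2π)) θ) cos θ` is `o(θ)` as `θ → 0` from the right. -/
theorem F_asymptotic_expansion (L : ℕ) :
    (fun θ : ℝ => F L θ - (1 - (L : ℝ) / (2 * Real.pi) * θ) * Real.cos θ)
      =o[nhdsWithin 0 (Set.Ioi 0)] fun θ : ℝ => θ := by
  have hcomparison : HasDerivWithinAt (fun θ => (1 - L / (2 * π) * θ) * cos θ)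
      (-(L / (2 * π))) (Ici 0) 0 := by
    simpa using (((hasDerivAt_id (0 : ℝ)).const_mul (L / (2 * π))).const_sub 1).fun_mul
      (hasDerivAt_cos 0) |>.hasDerivWithinAt
  have hdiff := ((hasDerivWithinAt_F L).fun_sub hcomparison).isLittleO
  simp only [F_zero, sub_self, smul_zero, sub_zero, mul_zero, cos_zero, mul_one] at hdiff
  exact hdiff.mono (nhdsWithin_mono _ Ioi_subset_Ici_self)
end
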